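/- arXiv:2501.17946 — 12 statements merged into one kernel-verified Lean document; each statement's English description precedes it below -/
import Mathlib

section
/- Let Φ : ℝⁿ → ℝⁿ be differentiable, G : ℝⁿ → ℝⁿ, R : ℝⁿ → ℝ, and define F(x) = R(x) · adj(DΦ(x)) · G(Φ(x)). If I : ℝⁿ → ℝ is differentiable and satisfies ∇I(u) · G(u) = 0 for all u, then H(x) := I(Φ(x)) satisfies ∇H(x) · F(x) = 0 for all x. -/
open Matrix

/-- Jacobian matrix of a map `Φ : ℝⁿ → ℝⁿ` at a point `x`. -/
noncomputable def jacobian {n : ℕ} (Φ : (Fin n → ℝ) → (Fin n → ℝ)) (x : Fin n → ℝ) :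
    Matrix (Fin n) (Fin n) ℝ :=
  Matrix.of fun i j => fderiv ℝ Φ x (Pi.single j 1) i

theorem stmt0 {n : ℕ} (Φ G : (Fin n → ℝ) → (Fin n → ℝ)) (R : (Fin n → ℝ) → ℝ)
    (I : (Fin n → ℝ) → ℝ)
    (hΦ : Differentiable ℝ Φ) (hI : Differentiable ℝ I)
    (hIG : ∀ u, fderiv ℝ I u (G u) = 0)
    (F : (Fin n → ℝ) → (Fin n → ℝ))
    (hF : ∀ x, F x = R x • (Matrix.adjugate (jacobian Φ x)) *ᵥ (G (Φ x))) :
    ∀ x, fderiv ℝ (fun y => I (Φ y)) x (F x) = 0 := by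
  intro x
  have hchain : fderiv ℝ (fun y => I (Φ y)) x
      = (fderiv ℝ I (Φ x)).comp (fderiv ℝ Φ x) :=
    fderiv_comp x (hI (Φ x)) (hΦ x)
  have hjac : ∀ v, fderiv ℝ Φ x v = jacobian Φ x *ᵥ v := by
    intro v
    have hv : v = ∑ j, v j • (Pi.single j (1:ℝ) : Fin n → ℝ) := by
      funext i
      simp [Pi.single_apply, Finset.sum_apply, mul_comm]
    conv_lhs => rw [hv]
    rw [map_sum]
    funext i
    simp only [Finset.sum_apply, _root_.map_smul, Pi.smul_apply, smul_eq_mul]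
    simp [Matrix.mulVec, dotProduct, jacobian, mul_comm]
  have hFv : fderiv ℝ Φ x (F x)
      = (R x * (jacobian Φ x).det) • G (Φ x) := by
    rw [hjac, hF]
    rw [mulVec_smul, Matrix.mulVec_mulVec,
      Matrix.mul_adjugate, smul_mulVec, Matrix.one_mulVec, smul_smul]
  rw [hchain]
  simp [hFv, hIG]
end

section
/- The function H(x,y) = x·y·exp(−x − x·y − y²/2) is a first integral of the planar Kolmogorov system ẋ = x(−1 + xy + y²), ẏ = y(1 − x − xy); that is, ∂H/∂x · x(−1+xy+y²) + ∂H/∂y · y(1−x−xy) = 0 for all (x,y) ∈ ℝ². -/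
/-!
Writing `H = x y e^g` with `g = -x - x y - y²/2`, one finds `∂H/∂x = e^g Q` and `∂H/∂y = -e^g P`:
the system is the Hamiltonian field of `H` rescaled by the positive factor `e^{-g}`, so `H` is
constant along it.
-/

open Real

lemma hasDerivAt_kolmogorovIntegral_fst (x y : ℝ) :
    HasDerivAt (fun x' => x' * y * exp (-x' - x' * y - y ^ 2 / 2))
      (exp (-x - x * y - y ^ 2 / 2) * (y * (1 - x - x * y))) x := by
  have hg : HasDerivAt (fun x' => -x' - x' * y - y ^ 2 / 2) (-1 - y) x :=
    (((hasDerivAt_id' x).neg.sub ((hasDerivAt_id' x).mul_const y)).sub_const _).congr_deriv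
      (by ring)
  exact (((hasDerivAt_id' x).mul_const y).mul hg.exp).congr_deriv (by ring)

lemma hasDerivAt_kolmogorovIntegral_snd (x y : ℝ) :
    HasDerivAt (fun y' => x * y' * exp (-x - x * y' - y' ^ 2 / 2))
      (-(exp (-x - x * y - y ^ 2 / 2) * (x * (-1 + x * y + y ^ 2)))) y := by
  have hg : HasDerivAt (fun y' => -x - x * y' - y' ^ 2 / 2) (-x - y) y :=
    ((((hasDerivAt_id' y).const_mul x).const_sub (-x)).sub
      ((hasDerivAt_pow 2 y).div_const 2)).congr_deriv (by push_cast; ring)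
  exact (((hasDerivAt_id' y).const_mul x).mul hg.exp).congr_deriv (by ring)

theorem stmt4 : ∀ x y : ℝ,
    deriv (fun x' => x' * y * Real.exp (-x' - x' * y - y ^ 2 / 2)) x *
        (x * (-1 + x * y + y ^ 2)) +
      deriv (fun y' => x * y' * Real.exp (-x - x * y' - y' ^ 2 / 2)) y *
        (y * (1 - x - x * y)) = 0 := by
  intro x y
  rw [(hasDerivAt_kolmogorovIntegral_fst x y).deriv, (hasDerivAt_kolmogorovIntegral_snd x y).deriv]
  ring
end

section
/- For any real a, the function H(x,y) = (x² + 2y²)(2x² + y²)^(a−1) is a first integral of the planar system ẋ = 2(a+3)x²y + 4ay³, ẏ = −4ax³ − 2(4a−3)xy², on the set where 2x² + y² > 0. -/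
/- With `u = 2x² + y²` and `v = x² + 2y²`, both partial derivatives of `H = v u^(a-1)` carry the
factor `u^(a-2)`, and what remains of `∇H · (P, Q)` is a polynomial in `x, y, a` that vanishes
identically. -/

theorem HasDerivAt.mul_rpow_const {f g : ℝ → ℝ} {f' g' x : ℝ} (p : ℝ)
    (hf : HasDerivAt f f' x) (hg : HasDerivAt g g' x) (hgx : g x ≠ 0) :
    HasDerivAt (fun t => f t * g t ^ p) ((f' * g x + p * f x * g') * g x ^ (p - 1)) x := by
  refine (hf.mul (hg.rpow_const (Or.inl hgx))).congr_deriv ?_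
  rw [Real.rpow_sub_one hgx]
  field_simp

theorem stmt6 (a : ℝ) : ∀ x y : ℝ, 2 * x ^ 2 + y ^ 2 > 0 →
    deriv (fun x' => (x' ^ 2 + 2 * y ^ 2) * (2 * x' ^ 2 + y ^ 2) ^ (a - 1)) x *
        (2 * (a + 3) * x ^ 2 * y + 4 * a * y ^ 3) +
      deriv (fun y' => (x ^ 2 + 2 * y' ^ 2) * (2 * x ^ 2 + y' ^ 2) ^ (a - 1)) y *
        (-4 * a * x ^ 3 - 2 * (4 * a - 3) * x * y ^ 2) = 0 := by
  intro x y hu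
  have hx : HasDerivAt (fun x' => (x' ^ 2 + 2 * y ^ 2) * (2 * x' ^ 2 + y ^ 2) ^ (a - 1))
      ((2 * x * (2 * x ^ 2 + y ^ 2) + (a - 1) * (x ^ 2 + 2 * y ^ 2) * (4 * x)) *
        (2 * x ^ 2 + y ^ 2) ^ (a - 1 - 1)) x :=
    HasDerivAt.mul_rpow_const _
      (((hasDerivAt_pow 2 x).add_const _).congr_deriv (by norm_num))
      ((((hasDerivAt_pow 2 x).const_mul 2).add_const _).congr_deriv (by norm_num; ring))
      hu.ne'
  have hy : HasDerivAt (fun y' => (x ^ 2 + 2 * y' ^ 2) * (2 * x ^ 2 + y' ^ 2) ^ (a - 1))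
      ((4 * y * (2 * x ^ 2 + y ^ 2) + (a - 1) * (x ^ 2 + 2 * y ^ 2) * (2 * y)) *
        (2 * x ^ 2 + y ^ 2) ^ (a - 1 - 1)) y :=
    HasDerivAt.mul_rpow_const _
      ((((hasDerivAt_pow 2 y).const_mul 2).const_add _).congr_deriv (by norm_num; ring))
      (((hasDerivAt_pow 2 y).const_add _).congr_deriv (by norm_num))
      hu.ne'
  rw [hx.deriv, hy.deriv]
  ring
end

section
/- Let a, b ∈ ℝ, c, B ∈ ℝ \ {0}, and let p, q ∈ ℕ with b = −(p+q)B/q. Then H(x,y) = (xy)^q · (By − ax − c)^p is a polynomial first integral on ℝ² of the Lotka–Volterra system ẋ = x(ax + by + c), ẏ = y((ab/B)x + By − c). -/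
/-!
The lines `x = 0`, `y = 0` and `By - ax - c = 0` are invariant curves of the system: along the
vector field, `x`, `y` and `u = By - ax - c` are multiplied by the cofactors `ax + by + c`,
`(ab/B)x + By - c` and `ax + By` (for `u` this uses `-aẋ + Bẏ = (ax + By) u`). Cofactors add
under products, so `H = (xy)^q u^p` has cofactor `q((a + ab/B)x + (b + B)y) + p(ax + By)`, which
vanishes identically when `qb = -(p + q)B`.
-/

variable {𝕜 : Type*} [NontriviallyNormedField 𝕜]

/-- `F` is a Darboux function of the planar vector field `(P, Q)`, with cofactor `K`. -/
def HasCofactor (P Q F K : 𝕜 → 𝕜 → 𝕜) : Prop :=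
  ∀ x y, ∃ Fx Fy, HasDerivAt (fun x' => F x' y) Fx x ∧ HasDerivAt (fun y' => F x y') Fy y ∧
    Fx * P x y + Fy * Q x y = K x y * F x y

namespace HasCofactor

variable {P Q F G K L : 𝕜 → 𝕜 → 𝕜}

theorem deriv_mul_add_deriv_mul (h : HasCofactor P Q F K) (x y : 𝕜) :
    deriv (fun x' => F x' y) x * P x y + deriv (fun y' => F x y') y * Q x y =
      K x y * F x y := by
  obtain ⟨Fx, Fy, hFx, hFy, hF⟩ := h x y
  rw [hFx.deriv, hFy.deriv, hF]

theorem of_cofactor_eq (h : HasCofactor P Q F K) (hK : ∀ x y, K x y = L x y) :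
    HasCofactor P Q F L := by
  intro x y
  obtain ⟨Fx, Fy, hFx, hFy, hF⟩ := h x y
  exact ⟨Fx, Fy, hFx, hFy, hK x y ▸ hF⟩

theorem mul (hF : HasCofactor P Q F K) (hG : HasCofactor P Q G L) :
    HasCofactor P Q (fun x y => F x y * G x y) (fun x y => K x y + L x y) := by
  intro x y
  obtain ⟨Fx, Fy, hFx, hFy, hF⟩ := hF x y
  obtain ⟨Gx, Gy, hGx, hGy, hG⟩ := hG x y
  refine ⟨Fx * G x y + F x y * Gx, Fy * G x y + F x y * Gy, hFx.mul hGx, hFy.mul hGy, ?_⟩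
  linear_combination G x y * hF + F x y * hG

theorem pow (hF : HasCofactor P Q F K) (n : ℕ) :
    HasCofactor P Q (fun x y => F x y ^ n) (fun x y => n * K x y) := by
  induction n with
  | zero =>
    refine fun x y => ⟨0, 0, ?_, ?_, by simp⟩ <;> simpa using hasDerivAt_const _ (1 : 𝕜)
  | succ n ih =>
    have h := ih.mul hF
    simp only [← pow_succ] at h
    exact h.of_cofactor_eq fun x y => by push_cast; ring

end HasCofactor

theorem hasCofactor_fst {P Q K : 𝕜 → 𝕜 → 𝕜} (hP : ∀ x y, P x y = x * K x y) :
    HasCofactor P Q (fun x _ => x) K :=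
  fun x y => ⟨1, 0, hasDerivAt_id x, hasDerivAt_const y x, by rw [hP]; ring⟩

theorem hasCofactor_snd {P Q K : 𝕜 → 𝕜 → 𝕜} (hQ : ∀ x y, Q x y = y * K x y) :
    HasCofactor P Q (fun _ y => y) K :=
  fun x y => ⟨0, 1, hasDerivAt_const x y, hasDerivAt_id y, by rw [hQ]; ring⟩

section LotkaVolterra

variable (a b c B : 𝕜)

def lotkaVolterraX (x y : 𝕜) : 𝕜 := x * (a * x + b * y + c)

def lotkaVolterraY (x y : 𝕜) : 𝕜 := y * (a * b / B * x + B * y - c)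

theorem hasCofactor_mul_lotkaVolterra :
    HasCofactor (lotkaVolterraX a b c) (lotkaVolterraY a b c B) (fun x y => x * y)
      (fun x y => (a * x + b * y + c) + (a * b / B * x + B * y - c)) :=
  (hasCofactor_fst fun _ _ => rfl).mul (hasCofactor_snd fun _ _ => rfl)

theorem hasCofactor_invariantLine_lotkaVolterra {B : 𝕜} (hB : B ≠ 0) :
    HasCofactor (lotkaVolterraX a b c) (lotkaVolterraY a b c B) (fun x y => B * y - a * x - c)
      (fun x y => a * x + B * y) := by
  intro x y
  refine ⟨-a, B, ?_, ?_, ?_⟩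
  · simpa using ((hasDerivAt_id x).const_mul a).const_sub (B * y) |>.sub_const c
  · simpa using (((hasDerivAt_id y).const_mul B).sub_const (a * x)).sub_const c
  · simp only [lotkaVolterraX, lotkaVolterraY]
    field_simp
    ring

theorem lotkaVolterra_cofactor_eq_zero {B : 𝕜} (hB : B ≠ 0) {p q : ℕ} (hq : (q : 𝕜) ≠ 0)
    (hb : b = -((p : 𝕜) + q) * B / q) (x y : 𝕜) :
    q * ((a * x + b * y + c) + (a * b / B * x + B * y - c)) + p * (a * x + B * y) = 0 := by
  subst hb
  field_simp
  ring

end LotkaVolterra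

theorem stmt7_general (a b c B : ℝ) (hB : B ≠ 0) (p q : ℕ)
    (hq : 0 < q) (hb : b = -((p : ℝ) + q) * B / q) :
    ∀ x y : ℝ,
      deriv (fun x' => (x' * y) ^ q * (B * y - a * x' - c) ^ p) x *
          (x * (a * x + b * y + c)) +
        deriv (fun y' => (x * y') ^ q * (B * y' - a * x - c) ^ p) y *
          (y * (a * b / B * x + B * y - c)) = 0 := by
  intro x y
  have hH := ((hasCofactor_mul_lotkaVolterra a b c B).pow q).mul
    ((hasCofactor_invariantLine_lotkaVolterra a b c hB).pow p)
  refine (hH.deriv_mul_add_deriv_mul x y).trans ?_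
  simp only [lotkaVolterra_cofactor_eq_zero a b c hB (Nat.cast_ne_zero.mpr hq.ne') hb, zero_mul]

theorem stmt7 (a b c B : ℝ) (hc : c ≠ 0) (hB : B ≠ 0) (p q : ℕ)
    (hp : 0 < p) (hq : 0 < q) (hb : b = -((p : ℝ) + q) * B / q) :
    ∀ x y : ℝ,
      deriv (fun x' => (x' * y) ^ q * (B * y - a * x' - c) ^ p) x *
          (x * (a * x + b * y + c)) +
        deriv (fun y' => (x * y') ^ q * (B * y' - a * x - c) ^ p) y *
          (y * (a * b / B * x + B * y - c)) = 0 :=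
  stmt7_general a b c B hB p q hq hb
end

section
/- Let a, c ∈ ℝ, b, B ∈ ℝ \ {0}, and p, q ∈ ℕ with −b/B = p/q. Then H(x,y) = x^q · (cy + axy + (b/2)y²)^p is a polynomial first integral on ℝ² of the system ẋ = x(ax + by + c), ẏ = y((a(B−b)/b)x + (B/2)y + Bc/b). -/
/-!
Write `L = a x + b y + c` and `u = c y + a x y + (b/2) y²`. Both `x` and `u` are Darboux
polynomials of the vector field, with cofactors `L` and `(B/b) L`, so `x^q u^p` is Darboux with
cofactor `(q + p B / b) L`, which vanishes because `p B = -q b`.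
-/

theorem natCast_mul_pow_pred_mul {R : Type*} [Semiring R] (r : R) (m : ℕ) :
    (m : R) * r ^ (m - 1) * r = m * r ^ m := by
  rcases eq_or_ne m 0 with rfl | hm
  · simp
  · rw [mul_assoc, pow_sub_one_mul hm]

section LieDeriv

variable {𝕜 : Type*} [NontriviallyNormedField 𝕜] (P Q : 𝕜 → 𝕜 → 𝕜)

noncomputable def lieDeriv (F : 𝕜 → 𝕜 → 𝕜) (x y : 𝕜) : 𝕜 :=
  deriv (fun x' => F x' y) x * P x y + deriv (fun y' => F x y') y * Q x y

variable {P Q}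

theorem lieDeriv_pow_mul_pow {F G : 𝕜 → 𝕜 → 𝕜} {x y : 𝕜} (m n : ℕ)
    (hFx : DifferentiableAt 𝕜 (fun x' => F x' y) x) (hFy : DifferentiableAt 𝕜 (F x) y)
    (hGx : DifferentiableAt 𝕜 (fun x' => G x' y) x) (hGy : DifferentiableAt 𝕜 (G x) y) :
    lieDeriv P Q (fun x y => F x y ^ m * G x y ^ n) x y =
      m * F x y ^ (m - 1) * G x y ^ n * lieDeriv P Q F x y +
        n * F x y ^ m * G x y ^ (n - 1) * lieDeriv P Q G x y := by
  simp only [lieDeriv]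
  rw [((hFx.hasDerivAt.fun_pow m).fun_mul (hGx.hasDerivAt.fun_pow n)).deriv,
    ((hFy.hasDerivAt.fun_pow m).fun_mul (hGy.hasDerivAt.fun_pow n)).deriv]
  ring

theorem lieDeriv_pow_mul_pow_of_darboux {F G : 𝕜 → 𝕜 → 𝕜} {x y k l : 𝕜} (m n : ℕ)
    (hFx : DifferentiableAt 𝕜 (fun x' => F x' y) x) (hFy : DifferentiableAt 𝕜 (F x) y)
    (hGx : DifferentiableAt 𝕜 (fun x' => G x' y) x) (hGy : DifferentiableAt 𝕜 (G x) y)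
    (hF : lieDeriv P Q F x y = k * F x y) (hG : lieDeriv P Q G x y = l * G x y) :
    lieDeriv P Q (fun x y => F x y ^ m * G x y ^ n) x y =
      (m * k + n * l) * (F x y ^ m * G x y ^ n) := by
  rw [lieDeriv_pow_mul_pow m n hFx hFy hGx hGy, hF, hG]
  linear_combination k * G x y ^ n * natCast_mul_pow_pred_mul (F x y) m +
    l * F x y ^ m * natCast_mul_pow_pred_mul (G x y) n

end LieDeriv

section System

variable (a b c B : ℝ)

def fieldP (x y : ℝ) : ℝ := x * (a * x + b * y + c)

noncomputable def fieldQ (x y : ℝ) : ℝ := y * (a * (B - b) / b * x + B / 2 * y + B * c / b)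

noncomputable def darbouxU (x y : ℝ) : ℝ := c * y + a * x * y + b / 2 * y ^ 2

theorem lieDeriv_fst (x y : ℝ) :
    lieDeriv (fieldP a b c) (fieldQ a b c B) (fun x _ => x) x y = (a * x + b * y + c) * x := by
  simp only [lieDeriv, fieldP, deriv_id'', deriv_const']
  ring

theorem hasDerivAt_darbouxU_left (x y : ℝ) :
    HasDerivAt (fun x' => darbouxU a b c x' y) (a * y) x := by
  have h : (fun x' => darbouxU a b c x' y) =
      fun x' => a * y * x' + (c * y + b / 2 * y ^ 2) := by
    ext x'
    simp only [darbouxU]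
    ring
  rw [h]
  exact (((hasDerivAt_id' x).const_mul (a * y)).add_const _).congr_deriv (mul_one _)

theorem hasDerivAt_darbouxU_right (x y : ℝ) :
    HasDerivAt (darbouxU a b c x) (c + a * x + b * y) y := by
  have h : darbouxU a b c x = fun y' => (c + a * x) * y' + b / 2 * y' ^ 2 := by
    ext y'
    simp only [darbouxU]
    ring
  rw [h]
  exact (((hasDerivAt_id' y).const_mul _).add ((hasDerivAt_pow 2 y).const_mul _)).congr_deriv
    (by push_cast; ring)

theorem lieDeriv_darbouxU (hb : b ≠ 0) (x y : ℝ) :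
    lieDeriv (fieldP a b c) (fieldQ a b c B) (darbouxU a b c) x y =
      B / b * (a * x + b * y + c) * darbouxU a b c x y := by
  rw [lieDeriv, (hasDerivAt_darbouxU_left a b c x y).deriv,
    (hasDerivAt_darbouxU_right a b c x y).deriv]
  simp only [fieldP, fieldQ, darbouxU]
  field_simp
  ring

end System

theorem stmt8_general (a c b B : ℝ) (hb : b ≠ 0) (hB : B ≠ 0) (p q : ℕ)
    (hq : 0 < q) (hbB : -b / B = (p : ℝ) / q) :
    ∀ x y : ℝ,
      deriv (fun x' => x' ^ q * (c * y + a * x' * y + b / 2 * y ^ 2) ^ p) x *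
          (x * (a * x + b * y + c)) +
        deriv (fun y' => x ^ q * (c * y' + a * x * y' + b / 2 * y' ^ 2) ^ p) y *
          (y * (a * (B - b) / b * x + B / 2 * y + B * c / b)) = 0 := by
  intro x y
  have hpB : (p : ℝ) * B = -(q * b) := by
    rw [div_eq_div_iff hB (Nat.cast_ne_zero.mpr hq.ne')] at hbB
    linarith
  have hcofactor : (q : ℝ) * (a * x + b * y + c) + p * (B / b * (a * x + b * y + c)) = 0 := by
    field_simp
    linear_combination (a * x + b * y + c) * hpB
  -- `h` is the goal once `lieDeriv`, `fieldP`, `fieldQ` and `darbouxU` are unfolded.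
  have h := lieDeriv_pow_mul_pow_of_darboux q p differentiableAt_id (differentiableAt_const x)
    (hasDerivAt_darbouxU_left a b c x y).differentiableAt
    (hasDerivAt_darbouxU_right a b c x y).differentiableAt
    (lieDeriv_fst a b c B x y) (lieDeriv_darbouxU a b c B hb x y)
  rwa [hcofactor, zero_mul] at h

theorem stmt8 (a c b B : ℝ) (hb : b ≠ 0) (hB : B ≠ 0) (p q : ℕ)
    (hp : 0 < p) (hq : 0 < q) (hbB : -b / B = (p : ℝ) / q) :
    ∀ x y : ℝ,
      deriv (fun x' => x' ^ q * (c * y + a * x' * y + b / 2 * y ^ 2) ^ p) x *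
          (x * (a * x + b * y + c)) +
        deriv (fun y' => x ^ q * (c * y' + a * x * y' + b / 2 * y' ^ 2) ^ p) y *
          (y * (a * (B - b) / b * x + B / 2 * y + B * c / b)) = 0 :=
  stmt8_general a c b B hb hB p q hq hbB
end

section
/- The polynomials H₁(x,y,z) = yz(xz + x²) and H₂(x,y,z) = yz(xz − y) are both first integrals of the Kolmogorov system ẋ = x(xy + 3yz + x²z), ẏ = y(2xy + yz − 3x²z), ż = z(−4xy − 2yz + x²z) on ℝ³. -/
lemma dquad (a b c x : ℝ) : deriv (fun t => a * t ^ 2 + b * t + c) x = 2 * a * x + b := by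
  have h : HasDerivAt (fun t => a * t ^ 2 + b * t + c) (a * (2 * x ^ 1) + b * 1) x := by
    exact (((hasDerivAt_pow 2 x).const_mul a).add ((hasDerivAt_id x).const_mul b)).add_const c
  rw [h.deriv]; ring

theorem stmt9 : ∀ x y z : ℝ,
    (deriv (fun t => y * z * (t * z + t ^ 2)) x * (x * (x * y + 3 * y * z + x ^ 2 * z)) +
      deriv (fun t => t * z * (x * z + x ^ 2)) y * (y * (2 * x * y + y * z - 3 * x ^ 2 * z)) +
      deriv (fun t => y * t * (x * t + x ^ 2)) z * (z * (-4 * x * y - 2 * y * z + x ^ 2 * z)) = 0)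
    ∧
    (deriv (fun t => y * z * (t * z - y)) x * (x * (x * y + 3 * y * z + x ^ 2 * z)) +
      deriv (fun t => t * z * (x * z - t)) y * (y * (2 * x * y + y * z - 3 * x ^ 2 * z)) +
      deriv (fun t => y * t * (x * t - y)) z * (z * (-4 * x * y - 2 * y * z + x ^ 2 * z)) = 0) := by
  intro x y z
  have e1 : (fun t => y * z * (t * z + t ^ 2)) = fun t => (y * z) * t ^ 2 + (y * z * z) * t + 0 := by
    funext t; ring
  have e2 : (fun t => t * z * (x * z + x ^ 2)) = fun t => (0:ℝ) * t ^ 2 + (z * (x * z + x ^ 2)) * t + 0 := by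
    funext t; ring
  have e3 : (fun t => y * t * (x * t + x ^ 2)) = fun t => (y * x) * t ^ 2 + (y * x ^ 2) * t + 0 := by
    funext t; ring
  have e4 : (fun t => y * z * (t * z - y)) = fun t => (0:ℝ) * t ^ 2 + (y * z * z) * t + (-(y * z * y)) := by
    funext t; ring
  have e5 : (fun t => t * z * (x * z - t)) = fun t => (-z) * t ^ 2 + (z * x * z) * t + 0 := by
    funext t; ring
  have e6 : (fun t => y * t * (x * t - y)) = fun t => (y * x) * t ^ 2 + (-(y * y)) * t + 0 := by
    funext t; ring
  rw [e1, e2, e3, e4, e5, e6]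
  simp only [dquad]
  constructor <;> ring
end

section
/- The functions H₁(x,y,z) = (x² + y²)/2 + z and H₂(x,y,z) = z·e^(−y) are both first integrals of the Rössler system ẋ = −y − z, ẏ = x, ż = xz on ℝ³, and they are functionally independent. -/
/-- Gradient of a function of three real variables, via partial derivatives. -/
noncomputable def grad3 (H : ℝ → ℝ → ℝ → ℝ) (x y z : ℝ) : Fin 3 → ℝ :=
  ![deriv (fun t => H t y z) x, deriv (fun t => H x t z) y, deriv (fun t => H x y t) z]

/-! The gradient of `H₁` is `(x, y, 1)` and that of `H₂` is `(0, -z e^{-y}, e^{-y})`. Their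
dot products with `(-y - z, x, x z)` vanish identically, and off the plane `x = 0` the first
coordinate of `∇H₁` and the last coordinate of `∇H₂` are nonzero, so the gradients are independent. -/

open Real

lemma grad3_quadratic_add (x y z : ℝ) :
    grad3 (fun x y z => (x ^ 2 + y ^ 2) / 2 + z) x y z = ![x, y, 1] := by
  have hx : HasDerivAt (fun t => (t ^ 2 + y ^ 2) / 2 + z) x x := by
    simpa using (((hasDerivAt_pow 2 x).add_const (y ^ 2)).div_const 2).add_const z
  have hy : HasDerivAt (fun t => (x ^ 2 + t ^ 2) / 2 + z) y y := by
    simpa using (((hasDerivAt_pow 2 y).const_add (x ^ 2)).div_const 2).add_const z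
  have hz : HasDerivAt (fun t => (x ^ 2 + y ^ 2) / 2 + t) 1 z :=
    (hasDerivAt_id z).const_add _
  simp only [grad3, hx.deriv, hy.deriv, hz.deriv]

lemma grad3_mul_exp_neg (x y z : ℝ) :
    grad3 (fun _ y z => z * exp (-y)) x y z = ![0, -z * exp (-y), exp (-y)] := by
  have hy : HasDerivAt (fun t => z * exp (-t)) (-z * exp (-y)) y := by
    simpa using ((hasDerivAt_neg y).exp).const_mul z
  have hz : HasDerivAt (fun t => t * exp (-y)) (exp (-y)) z := by
    simpa using (hasDerivAt_id z).mul_const (exp (-y))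
  simp only [grad3, deriv_const, hy.deriv, hz.deriv]

lemma linearIndependent_pair_of_ne_zero {K : Type*} [Field K] {a b c d e : K}
    (ha : a ≠ 0) (he : e ≠ 0) : LinearIndependent K ![![a, b, c], ![0, d, e]] := by
  rw [LinearIndependent.pair_iff]
  intro s t hst
  have h0 : s * a = 0 := by simpa using congrFun hst 0
  have hs : s = 0 := (mul_eq_zero.1 h0).resolve_right ha
  have h2 : s * c + t * e = 0 := by simpa using congrFun hst 2
  rw [hs, zero_mul, zero_add] at h2
  exact ⟨hs, (mul_eq_zero.1 h2).resolve_right he⟩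

theorem stmt11 :
    (∀ x y z : ℝ,
      deriv (fun t => (t ^ 2 + y ^ 2) / 2 + z) x * (-y - z) +
        deriv (fun t => (x ^ 2 + t ^ 2) / 2 + z) y * x +
        deriv (fun t => (x ^ 2 + y ^ 2) / 2 + t) z * (x * z) = 0) ∧
    (∀ x y z : ℝ,
      deriv (fun _ : ℝ => z * Real.exp (-y)) x * (-y - z) +
        deriv (fun t => z * Real.exp (-t)) y * x +
        deriv (fun t => t * Real.exp (-y)) z * (x * z) = 0) ∧
    (∃ S : Set (ℝ × ℝ × ℝ), IsOpen S ∧ Dense S ∧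
      ∀ p ∈ S, LinearIndependent ℝ
        ![grad3 (fun x y z => (x ^ 2 + y ^ 2) / 2 + z) p.1 p.2.1 p.2.2,
          grad3 (fun _ y z => z * Real.exp (-y)) p.1 p.2.1 p.2.2]) := by
  refine ⟨fun x y z => ?_, fun x y z => ?_, ⟨{p | p.1 ≠ 0}, ?_, ?_, ?_⟩⟩
  · set H := fun x y z : ℝ => (x ^ 2 + y ^ 2) / 2 + z
    change grad3 H x y z 0 * (-y - z) + grad3 H x y z 1 * x + grad3 H x y z 2 * (x * z) = 0
    rw [grad3_quadratic_add]
    simp only [Matrix.cons_val]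
    ring
  · set H := fun (_ : ℝ) (y z : ℝ) => z * exp (-y)
    change grad3 H x y z 0 * (-y - z) + grad3 H x y z 1 * x + grad3 H x y z 2 * (x * z) = 0
    rw [grad3_mul_exp_neg]
    simp only [Matrix.cons_val]
    ring
  · exact isOpen_ne.preimage continuous_fst
  · exact (dense_compl_singleton (0 : ℝ)).preimage isOpenMap_fst
  · rintro ⟨x, y, z⟩ hx
    rw [grad3_quadratic_add, grad3_mul_exp_neg]
    exact linearIndependent_pair_of_ne_zero hx (exp_ne_zero _)
end

section
/- The functions H₁(x,y,z) = (y² − x²)/2 and H₂(x,y,z) = (y − x)²·e^(x²+z²) are both first integrals of the Rikitake system ẋ = yz, ẏ = xz, ż = 1 − xy on ℝ³, and they are functionally independent. -/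
open Real

theorem LinearMap.dense_setOf_ne_zero {𝕜 M N : Type*} [NontriviallyNormedField 𝕜]
    [AddCommGroup M] [TopologicalSpace M] [ContinuousAdd M] [Module 𝕜 M] [ContinuousSMul 𝕜 M]
    [AddCommGroup N] [Module 𝕜 N] {f : M →ₗ[𝕜] N} (hf : f ≠ 0) :
    Dense {x | f x ≠ 0} := by
  refine interior_eq_empty_iff_dense_compl.mp (Set.not_nonempty_iff_eq_empty.mp fun h => hf ?_)
  exact ker_eq_top.mp ((ker f).eq_top_of_nonempty_interior' h)

theorem linearIndependent_pair_of_apply_eq_zero {K ι : Type*} [DivisionRing K] {u v : ι → K}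
    (j : ι) (hu : u ≠ 0) (huj : u j = 0) (hvj : v j ≠ 0) : LinearIndependent K ![u, v] := by
  rw [linearIndependent_fin2, Matrix.cons_val_one, Matrix.cons_val_zero]
  refine ⟨fun hv => hvj (by simp [hv]), fun a hav => hu ?_⟩
  have ha : a = 0 := by simpa [hvj, huj] using congrFun hav j
  simpa [ha] using hav.symm

theorem grad3_rikitakeH₁ (x y z : ℝ) :
    grad3 (fun x y _ => (y ^ 2 - x ^ 2) / 2) x y z = ![-x, y, 0] := by
  ext i
  fin_cases i <;> simp [grad3]
  ring

theorem deriv_rikitakeH₂_x (x y z : ℝ) :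
    deriv (fun t => (y - t) ^ 2 * exp (t ^ 2 + z ^ 2)) x
      = 2 * (y - x) * (x * (y - x) - 1) * exp (x ^ 2 + z ^ 2) :=
  ((((hasDerivAt_id' x).const_sub y).fun_pow 2).fun_mul
    ((hasDerivAt_pow 2 x).add_const (z ^ 2)).exp).deriv.trans (by push_cast; ring)

theorem deriv_rikitakeH₂_y (x y z : ℝ) :
    deriv (fun t => (t - x) ^ 2 * exp (x ^ 2 + z ^ 2)) y = 2 * (y - x) * exp (x ^ 2 + z ^ 2) :=
  ((((hasDerivAt_id' y).sub_const x).fun_pow 2).mul_const _).deriv.trans (by push_cast; ring)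

theorem deriv_rikitakeH₂_z (x y z : ℝ) :
    deriv (fun t => (y - x) ^ 2 * exp (x ^ 2 + t ^ 2)) z
      = 2 * z * (y - x) ^ 2 * exp (x ^ 2 + z ^ 2) :=
  ((((hasDerivAt_pow 2 z).const_add (x ^ 2)).exp).const_mul _).deriv.trans (by push_cast; ring)

theorem grad3_rikitakeH₂ (x y z : ℝ) :
    grad3 (fun x y z => (y - x) ^ 2 * exp (x ^ 2 + z ^ 2)) x y z =
      ![2 * (y - x) * (x * (y - x) - 1) * exp (x ^ 2 + z ^ 2),
        2 * (y - x) * exp (x ^ 2 + z ^ 2), 2 * z * (y - x) ^ 2 * exp (x ^ 2 + z ^ 2)] := by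
  simp only [grad3, deriv_rikitakeH₂_x, deriv_rikitakeH₂_y, deriv_rikitakeH₂_z]

theorem stmt12 :
    (∀ x y z : ℝ,
      deriv (fun t => (y ^ 2 - t ^ 2) / 2) x * (y * z) +
        deriv (fun t => (t ^ 2 - x ^ 2) / 2) y * (x * z) +
        deriv (fun _ : ℝ => (y ^ 2 - x ^ 2) / 2) z * (1 - x * y) = 0) ∧
    (∀ x y z : ℝ,
      deriv (fun t => (y - t) ^ 2 * Real.exp (t ^ 2 + z ^ 2)) x * (y * z) +
        deriv (fun t => (t - x) ^ 2 * Real.exp (x ^ 2 + z ^ 2)) y * (x * z) +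
        deriv (fun t => (y - x) ^ 2 * Real.exp (x ^ 2 + t ^ 2)) z * (1 - x * y) = 0) ∧
    (∃ S : Set (ℝ × ℝ × ℝ), IsOpen S ∧ Dense S ∧
      ∀ p ∈ S, LinearIndependent ℝ
        ![grad3 (fun x y _ => (y ^ 2 - x ^ 2) / 2) p.1 p.2.1 p.2.2,
          grad3 (fun x y z => (y - x) ^ 2 * Real.exp (x ^ 2 + z ^ 2)) p.1 p.2.1 p.2.2]) := by
  refine ⟨fun x y z => by simp; ring,
    fun x y z => by rw [deriv_rikitakeH₂_x, deriv_rikitakeH₂_y, deriv_rikitakeH₂_z]; ring, ?_⟩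
  have hyx_dense : Dense {p : ℝ × ℝ × ℝ | p.2.1 - p.1 ≠ 0} :=
    LinearMap.dense_setOf_ne_zero (f := LinearMap.fst ℝ ℝ ℝ ∘ₗ LinearMap.snd ℝ ℝ (ℝ × ℝ) -
      LinearMap.fst ℝ ℝ (ℝ × ℝ)) fun h => by simpa using LinearMap.congr_fun h (0, 1, 0)
  have hz_dense : Dense {p : ℝ × ℝ × ℝ | p.2.2 ≠ 0} :=
    LinearMap.dense_setOf_ne_zero (f := LinearMap.snd ℝ ℝ ℝ ∘ₗ LinearMap.snd ℝ ℝ (ℝ × ℝ))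
      fun h => by simpa using LinearMap.congr_fun h (0, 0, 1)
  have hyx_open : IsOpen {p : ℝ × ℝ × ℝ | p.2.1 - p.1 ≠ 0} :=
    isOpen_ne_fun (by fun_prop) continuous_const
  refine ⟨_, hyx_open.inter (isOpen_ne_fun (by fun_prop) continuous_const),
    hyx_dense.inter_of_isOpen_left hz_dense hyx_open, ?_⟩
  rintro ⟨x, y, z⟩ ⟨hyx : y - x ≠ 0, hz : z ≠ 0⟩
  rw [grad3_rikitakeH₁, grad3_rikitakeH₂]
  refine linearIndependent_pair_of_apply_eq_zero 2 (fun h => hyx ?_) rfl ?_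
  · have hx : -x = 0 := congrFun h 0
    have hy : y = 0 := congrFun h 1
    linarith
  · simp only [Matrix.cons_val_two, Matrix.tail_cons, Matrix.head_cons]
    positivity
end

section
/- Let a, c > 0 with a = p/q and c = p₁/q₁ for positive integers p, q, p₁, q₁. Then H₁(x,y,z) = x + cy + acz and H₂(x,y,z) = x^(p·q₁)·y^(q·q₁)·z^(p·p₁) are both first integrals of the Lotka–Volterra system ẋ = x(z − cy), ẏ = y(x − az), ż = z(y − x/(ac)) on ℝ³. -/
theorem stmt13 (a c : ℝ) (ha : 0 < a) (hc : 0 < c) (p q p₁ q₁ : ℕ)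
    (hp : 0 < p) (hq : 0 < q) (hp₁ : 0 < p₁) (hq₁ : 0 < q₁)
    (haeq : a = (p : ℝ) / q) (hceq : c = (p₁ : ℝ) / q₁) :
    (∀ x y z : ℝ,
      deriv (fun t => t + c * y + a * c * z) x * (x * (z - c * y)) +
        deriv (fun t => x + c * t + a * c * z) y * (y * (x - a * z)) +
        deriv (fun t => x + c * y + a * c * t) z * (z * (y - x / (a * c))) = 0) ∧
    (∀ x y z : ℝ,
      deriv (fun t => t ^ (p * q₁) * y ^ (q * q₁) * z ^ (p * p₁)) x * (x * (z - c * y)) +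
        deriv (fun t => x ^ (p * q₁) * t ^ (q * q₁) * z ^ (p * p₁)) y * (y * (x - a * z)) +
        deriv (fun t => x ^ (p * q₁) * y ^ (q * q₁) * t ^ (p * p₁)) z *
          (z * (y - x / (a * c))) = 0) := by
  have ha0 : a ≠ 0 := ha.ne'
  have hc0 : c ≠ 0 := hc.ne'
  constructor
  · intro x y z
    have g1 : deriv (fun t : ℝ => t + c * y + a * c * z) x = 1 := by
      simp
    have g2 : deriv (fun t : ℝ => x + c * t + a * c * z) y = c := by
      have h : HasDerivAt (fun t : ℝ => x + c * t + a * c * z) c y := by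
        simpa using (((hasDerivAt_id y).const_mul c).const_add x).add_const (a * c * z)
      exact h.deriv
    have g3 : deriv (fun t : ℝ => x + c * y + a * c * t) z = a * c := by
      have h : HasDerivAt (fun t : ℝ => x + c * y + a * c * t) (a * c) z := by
        simpa using ((hasDerivAt_id z).const_mul (a * c)).const_add (x + c * y)
      exact h.deriv
    rw [g1, g2, g3]
    field_simp
    ring
  · intro x y z
    have d1 : deriv (fun t : ℝ => t ^ (p * q₁) * y ^ (q * q₁) * z ^ (p * p₁)) x
        = (p * q₁ : ℕ) * x ^ (p * q₁ - 1) * y ^ (q * q₁) * z ^ (p * p₁) := by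
      simp [mul_assoc, deriv_mul_const_field, mul_comm, mul_left_comm]
    have d2 : deriv (fun t : ℝ => x ^ (p * q₁) * t ^ (q * q₁) * z ^ (p * p₁)) y
        = (q * q₁ : ℕ) * x ^ (p * q₁) * y ^ (q * q₁ - 1) * z ^ (p * p₁) := by
      simp [mul_assoc, mul_comm, mul_left_comm, deriv_const_mul_field, deriv_mul_const_field]
    have d3 : deriv (fun t : ℝ => x ^ (p * q₁) * y ^ (q * q₁) * t ^ (p * p₁)) z
        = (p * p₁ : ℕ) * x ^ (p * q₁) * y ^ (q * q₁) * z ^ (p * p₁ - 1) := by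
      simp [mul_assoc, mul_comm, mul_left_comm, deriv_const_mul_field]
    rw [d1, d2, d3]
    have e1 : x ^ (p * q₁ - 1) * x = x ^ (p * q₁) := by
      rw [← pow_succ]; congr 1
      have : 0 < p * q₁ := Nat.mul_pos hp hq₁
      omega
    have e2 : y ^ (q * q₁ - 1) * y = y ^ (q * q₁) := by
      rw [← pow_succ]; congr 1
      have : 0 < q * q₁ := Nat.mul_pos hq hq₁
      omega
    have e3 : z ^ (p * p₁ - 1) * z = z ^ (p * p₁) := by
      rw [← pow_succ]; congr 1
      have : 0 < p * p₁ := Nat.mul_pos hp hp₁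
      omega
    have key : ((p * q₁ : ℕ) : ℝ) * (z - c * y) + ((q * q₁ : ℕ) : ℝ) * (x - a * z)
        + ((p * p₁ : ℕ) : ℝ) * (y - x / (a * c)) = 0 := by
      have hq0 : (q : ℝ) ≠ 0 := Nat.cast_ne_zero.mpr hq.ne'
      have hq₁0 : (q₁ : ℝ) ≠ 0 := Nat.cast_ne_zero.mpr hq₁.ne'
      subst haeq hceq
      push_cast
      field_simp
      ring
    calc ((p * q₁ : ℕ) : ℝ) * x ^ (p * q₁ - 1) * y ^ (q * q₁) * z ^ (p * p₁) * (x * (z - c * y)) +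
        ((q * q₁ : ℕ) : ℝ) * x ^ (p * q₁) * y ^ (q * q₁ - 1) * z ^ (p * p₁) * (y * (x - a * z)) +
        ((p * p₁ : ℕ) : ℝ) * x ^ (p * q₁) * y ^ (q * q₁) * z ^ (p * p₁ - 1) * (z * (y - x / (a * c)))
        = x ^ (p * q₁) * y ^ (q * q₁) * z ^ (p * p₁) *
          (((p * q₁ : ℕ) : ℝ) * (z - c * y) + ((q * q₁ : ℕ) : ℝ) * (x - a * z)
            + ((p * p₁ : ℕ) : ℝ) * (y - x / (a * c))) := by
          rw [← e1, ← e2, ← e3]; ring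
      _ = 0 := by rw [key, mul_zero]
end

section
/- The polynomials H₁(x,y,z) = xz − y² and H₂(x,y,z) = yz − y² are both first integrals of the system ẋ = 2xy − xz − 2y², ẏ = −yz, ż = −2yz + z² on ℝ³, and they are functionally independent. -/
theorem grad3_xz_sub_sq (x y z : ℝ) :
    grad3 (fun x y z => x * z - y ^ 2) x y z = ![z, -2 * y, x] := by
  simp [grad3]

theorem grad3_yz_sub_sq (x y z : ℝ) :
    grad3 (fun _ y z => y * z - y ^ 2) x y z = ![0, z - 2 * y, y] := by
  simp [grad3]

theorem linearIndependent_pair_of_apply_ne_zero_of_apply_eq_zero {K ι : Type*} [Field K]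
    {v w : ι → K} {i : ι} (hv : v i ≠ 0) (hw : w i = 0) (hw₀ : w ≠ 0) :
    LinearIndependent K ![v, w] :=
  linearIndependent_fin2.2 ⟨hw₀, fun a h => hv (by simpa [hw] using (congrFun h i).symm)⟩

theorem stmt14 :
    (∀ x y z : ℝ,
      deriv (fun t => t * z - y ^ 2) x * (2 * x * y - x * z - 2 * y ^ 2) +
        deriv (fun t => x * z - t ^ 2) y * (-y * z) +
        deriv (fun t => x * t - y ^ 2) z * (-2 * y * z + z ^ 2) = 0) ∧
    (∀ x y z : ℝ,
      deriv (fun _ : ℝ => y * z - y ^ 2) x * (2 * x * y - x * z - 2 * y ^ 2) +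
        deriv (fun t => t * z - t ^ 2) y * (-y * z) +
        deriv (fun t => y * t - y ^ 2) z * (-2 * y * z + z ^ 2) = 0) ∧
    (∃ S : Set (ℝ × ℝ × ℝ), IsOpen S ∧ Dense S ∧
      ∀ p ∈ S, LinearIndependent ℝ
        ![grad3 (fun x y z => x * z - y ^ 2) p.1 p.2.1 p.2.2,
          grad3 (fun _ y z => y * z - y ^ 2) p.1 p.2.1 p.2.2]) := by
  refine ⟨fun x y z => ?_, fun x y z => ?_, {p | p.2.2 ≠ 0}, isOpen_ne_fun (by fun_prop)
    continuous_const, (dense_compl_singleton 0).preimage (isOpenMap_snd.comp isOpenMap_snd), ?_⟩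
  · have h := grad3_xz_sub_sq x y z
    simp only [grad3, Matrix.vecCons_inj] at h
    rw [h.1, h.2.1, h.2.2.1]
    ring
  · have h := grad3_yz_sub_sq x y z
    simp only [grad3, Matrix.vecCons_inj] at h
    rw [h.1, h.2.1, h.2.2.1]
    ring
  · rintro ⟨x, y, z⟩ (hz : z ≠ 0)
    rw [grad3_xz_sub_sq, grad3_yz_sub_sq]
    refine linearIndependent_pair_of_apply_ne_zero_of_apply_eq_zero (i := 0) hz rfl fun h => hz ?_
    have hy : y = 0 := by simpa using congrFun h 2
    simpa [hy] using congrFun h 1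
end

section
/- For each positive integer l, the functions H₁(x) = x₁x₃, H₂(x) = x₂x₄, and H₃(x) = x₁ˡ + x₂ˡ + x₃ˡ + x₄ˡ are three functionally independent polynomial first integrals of the 4-dimensional Kolmogorov system ẋ₁ = x₁(x₂ˡ − x₄ˡ), ẋ₂ = x₂(x₃ˡ − x₁ˡ), ẋ₃ = x₃(x₄ˡ − x₂ˡ), ẋ₄ = x₄(x₁ˡ − x₃ˡ) on ℝ⁴. -/
/-- Gradient of a function of four real variables, via partial derivatives. -/
noncomputable def grad4 (H : ℝ → ℝ → ℝ → ℝ → ℝ) (x₁ x₂ x₃ x₄ : ℝ) : Fin 4 → ℝ :=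
  ![deriv (fun t => H t x₂ x₃ x₄) x₁, deriv (fun t => H x₁ t x₃ x₄) x₂,
    deriv (fun t => H x₁ x₂ t x₄) x₃, deriv (fun t => H x₁ x₂ x₃ t) x₄]

private lemma dmulc (c a : ℝ) : deriv (fun t : ℝ => t * c) a = c := by
  simpa using (hasDerivAt_mul_const c (x := a)).deriv

private lemma dcmul (c a : ℝ) : deriv (fun t : ℝ => c * t) a = c := by
  simpa using ((hasDerivAt_id a).const_mul c).deriv

private lemma dpow1 (l : ℕ) (a C1 C2 C3 : ℝ) :
    deriv (fun t : ℝ => t ^ l + C1 + C2 + C3) a = l * a ^ (l - 1) := by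
  simpa using ((((hasDerivAt_pow l a).add_const C1).add_const C2).add_const C3).deriv

private lemma dpow2 (l : ℕ) (a C1 C2 C3 : ℝ) :
    deriv (fun t : ℝ => C1 + t ^ l + C2 + C3) a = l * a ^ (l - 1) := by
  simpa using ((((hasDerivAt_pow l a).const_add C1).add_const C2).add_const C3).deriv

private lemma dpow3 (l : ℕ) (a C1 C2 C3 : ℝ) :
    deriv (fun t : ℝ => C1 + C2 + t ^ l + C3) a = l * a ^ (l - 1) := by
  simpa using (((hasDerivAt_pow l a).const_add (C1 + C2)).add_const C3).deriv

private lemma dpow4 (l : ℕ) (a C1 C2 C3 : ℝ) :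
    deriv (fun t : ℝ => C1 + C2 + C3 + t ^ l) a = l * a ^ (l - 1) := by
  simpa using ((hasDerivAt_pow l a).const_add (C1 + C2 + C3)).deriv

private lemma pow_ne_of_sq_ne {a c : ℝ} (h : a ^ 2 ≠ c ^ 2) {l : ℕ} (hl : l ≠ 0) :
    a ^ l ≠ c ^ l := by
  intro he
  apply h
  have habs : |a| ^ l = |c| ^ l := by rw [← abs_pow, ← abs_pow, he]
  have : |a| = |c| := (pow_left_inj₀ (abs_nonneg a) (abs_nonneg c) hl).mp habs
  rw [← sq_abs a, ← sq_abs c, this]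

theorem stmt15 (l : ℕ) (hl : 0 < l) :
    (∀ x₁ x₂ x₃ x₄ : ℝ,
      deriv (fun t => t * x₃) x₁ * (x₁ * (x₂ ^ l - x₄ ^ l)) +
        deriv (fun _ : ℝ => x₁ * x₃) x₂ * (x₂ * (x₃ ^ l - x₁ ^ l)) +
        deriv (fun t => x₁ * t) x₃ * (x₃ * (x₄ ^ l - x₂ ^ l)) +
        deriv (fun _ : ℝ => x₁ * x₃) x₄ * (x₄ * (x₁ ^ l - x₃ ^ l)) = 0) ∧
    (∀ x₁ x₂ x₃ x₄ : ℝ,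
      deriv (fun _ : ℝ => x₂ * x₄) x₁ * (x₁ * (x₂ ^ l - x₄ ^ l)) +
        deriv (fun t => t * x₄) x₂ * (x₂ * (x₃ ^ l - x₁ ^ l)) +
        deriv (fun _ : ℝ => x₂ * x₄) x₃ * (x₃ * (x₄ ^ l - x₂ ^ l)) +
        deriv (fun t => x₂ * t) x₄ * (x₄ * (x₁ ^ l - x₃ ^ l)) = 0) ∧
    (∀ x₁ x₂ x₃ x₄ : ℝ,
      deriv (fun t => t ^ l + x₂ ^ l + x₃ ^ l + x₄ ^ l) x₁ * (x₁ * (x₂ ^ l - x₄ ^ l)) +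
        deriv (fun t => x₁ ^ l + t ^ l + x₃ ^ l + x₄ ^ l) x₂ * (x₂ * (x₃ ^ l - x₁ ^ l)) +
        deriv (fun t => x₁ ^ l + x₂ ^ l + t ^ l + x₄ ^ l) x₃ * (x₃ * (x₄ ^ l - x₂ ^ l)) +
        deriv (fun t => x₁ ^ l + x₂ ^ l + x₃ ^ l + t ^ l) x₄ * (x₄ * (x₁ ^ l - x₃ ^ l)) = 0) ∧
    (∃ S : Set (ℝ × ℝ × ℝ × ℝ), IsOpen S ∧ Dense S ∧
      ∀ p ∈ S, LinearIndependent ℝ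
        ![grad4 (fun x₁ _ x₃ _ => x₁ * x₃) p.1 p.2.1 p.2.2.1 p.2.2.2,
          grad4 (fun _ x₂ _ x₄ => x₂ * x₄) p.1 p.2.1 p.2.2.1 p.2.2.2,
          grad4 (fun x₁ x₂ x₃ x₄ => x₁ ^ l + x₂ ^ l + x₃ ^ l + x₄ ^ l)
            p.1 p.2.1 p.2.2.1 p.2.2.2]) := by
  obtain ⟨m, rfl⟩ : ∃ m, l = m + 1 := ⟨l - 1, (Nat.succ_pred_eq_of_pos hl).symm⟩
  refine ⟨?_, ?_, ?_, ?_⟩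
  · intro x₁ x₂ x₃ x₄
    rw [dmulc, dcmul, deriv_const, deriv_const]
    ring
  · intro x₁ x₂ x₃ x₄
    rw [dmulc, dcmul, deriv_const, deriv_const]
    ring
  · intro x₁ x₂ x₃ x₄
    rw [dpow1, dpow2, dpow3, dpow4]
    simp only [Nat.add_sub_cancel, pow_succ]
    ring
  · refine ⟨{p : ℝ × ℝ × ℝ × ℝ | p.1 ≠ 0 ∧ p.2.1 ≠ 0 ∧ p.1 ^ 2 ≠ p.2.2.1 ^ 2}, ?_, ?_, ?_⟩
    · have h1 : IsOpen {p : ℝ × ℝ × ℝ × ℝ | p.1 ≠ 0} :=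
        isOpen_ne.preimage continuous_fst
      have h2 : IsOpen {p : ℝ × ℝ × ℝ × ℝ | p.2.1 ≠ 0} :=
        isOpen_ne.preimage (continuous_fst.comp continuous_snd)
      have h3 : IsOpen {p : ℝ × ℝ × ℝ × ℝ | p.1 ^ 2 ≠ p.2.2.1 ^ 2} := by
        have : Continuous fun p : ℝ × ℝ × ℝ × ℝ => (p.1 ^ 2, p.2.2.1 ^ 2) := by
          fun_prop
        exact isOpen_ne_fun (by fun_prop) (by fun_prop)
      have he : {p : ℝ × ℝ × ℝ × ℝ | p.1 ≠ 0 ∧ p.2.1 ≠ 0 ∧ p.1 ^ 2 ≠ p.2.2.1 ^ 2}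
          = ({p : ℝ × ℝ × ℝ × ℝ | p.1 ≠ 0} ∩ {p | p.2.1 ≠ 0}) ∩ {p | p.1 ^ 2 ≠ p.2.2.1 ^ 2} := by
        ext p; simp [Set.mem_setOf_eq, and_assoc]
      rw [he]
      exact (h1.inter h2).inter h3
    · rw [Metric.dense_iff]
      intro p r hr
      -- pick a₁ near p.1 avoiding {0, p.2.2.1, -p.2.2.1}, a₂ near p.2.1 avoiding {0}
      obtain ⟨a₁, ha₁I, ha₁⟩ :
          ∃ a₁ ∈ Set.Ioo (p.1 - r/2) (p.1 + r/2), a₁ ∉ ({0, p.2.2.1, -p.2.2.1} : Finset ℝ) := by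
        have hinf : (Set.Ioo (p.1 - r/2) (p.1 + r/2)).Infinite :=
          Set.Ioo_infinite (by linarith)
        obtain ⟨a, ha, hna⟩ := hinf.exists_notMem_finset {0, p.2.2.1, -p.2.2.1}
        exact ⟨a, ha, hna⟩
      obtain ⟨a₂, ha₂I, ha₂⟩ :
          ∃ a₂ ∈ Set.Ioo (p.2.1 - r/2) (p.2.1 + r/2), a₂ ∉ ({0} : Finset ℝ) := by
        have hinf : (Set.Ioo (p.2.1 - r/2) (p.2.1 + r/2)).Infinite :=
          Set.Ioo_infinite (by linarith)
        obtain ⟨a, ha, hna⟩ := hinf.exists_notMem_finset {0}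
        exact ⟨a, ha, hna⟩
      simp only [Finset.mem_insert, Finset.mem_singleton, not_or] at ha₁ ha₂
      refine ⟨(a₁, a₂, p.2.2.1, p.2.2.2), ?_, ha₁.1, ha₂, ?_⟩
      · rw [Metric.mem_ball]
        obtain ⟨hI1, hI2⟩ := ha₁I
        obtain ⟨hJ1, hJ2⟩ := ha₂I
        have : dist (a₁, a₂, p.2.2.1, p.2.2.2) p =
            max (dist a₁ p.1) (max (dist a₂ p.2.1)
              (max (dist p.2.2.1 p.2.2.1) (dist p.2.2.2 p.2.2.2))) := by
          simp [Prod.dist_eq]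
        rw [this]
        simp only [dist_self, Real.dist_eq]
        have e1 : |a₁ - p.1| < r := by rw [abs_lt]; constructor <;> linarith
        have e2 : |a₂ - p.2.1| < r := by rw [abs_lt]; constructor <;> linarith
        simp only [max_lt_iff]
        exact ⟨e1, e2, by linarith, by linarith⟩
      · simp only [Set.mem_setOf_eq]
        intro h
        rcases sq_eq_sq_iff_eq_or_eq_neg.mp h with h' | h'
        · exact ha₁.2.1 h'
        · exact ha₁.2.2 h'
    · rintro ⟨a, b, c, d⟩ ⟨ha, hb, hac⟩
      have hpow : a ^ (m + 1) ≠ c ^ (m + 1) := pow_ne_of_sq_ne hac (Nat.succ_ne_zero m)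
      rw [Fintype.linearIndependent_iff]
      intro g hg
      have hv : ∀ i : Fin 4,
          g 0 * ![deriv (fun t : ℝ => t * c) a, deriv (fun _ : ℝ => a * c) b,
              deriv (fun t : ℝ => a * t) c, deriv (fun _ : ℝ => a * c) d] i +
          g 1 * ![deriv (fun _ : ℝ => b * d) a, deriv (fun t : ℝ => t * d) b,
              deriv (fun _ : ℝ => b * d) c, deriv (fun t : ℝ => b * t) d] i +
          g 2 * ![deriv (fun t : ℝ => t ^ (m+1) + b ^ (m+1) + c ^ (m+1) + d ^ (m+1)) a,
              deriv (fun t : ℝ => a ^ (m+1) + t ^ (m+1) + c ^ (m+1) + d ^ (m+1)) b,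
              deriv (fun t : ℝ => a ^ (m+1) + b ^ (m+1) + t ^ (m+1) + d ^ (m+1)) c,
              deriv (fun t : ℝ => a ^ (m+1) + b ^ (m+1) + c ^ (m+1) + t ^ (m+1)) d] i = 0 := by
        intro i
        have := congrFun hg i
        simpa [grad4, Fin.sum_univ_three] using this
      have h0 := hv 0
      have h1 := hv 1
      have h2 := hv 2
      have h3 := hv 3
      simp only [Matrix.cons_val_zero, Matrix.cons_val_one, Matrix.head_cons,
        Matrix.cons_val_two, Matrix.tail_cons, Matrix.cons_val_three] at h0 h1 h2 h3
      rw [dmulc, deriv_const, dpow1] at h0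
      rw [deriv_const, dmulc, dpow2] at h1
      rw [dcmul, deriv_const, dpow3] at h2
      rw [deriv_const, dcmul, dpow4] at h3
      simp only [Nat.add_sub_cancel, Nat.cast_add, Nat.cast_one] at h0 h1 h2 h3
      -- h0 : g0*c + g2*(m+1)*a^m = 0 ; h2 : g0*a + g2*(m+1)*c^m = 0
      have hg2 : g 2 = 0 := by
        have key : g 2 * ((m + 1 : ℝ) * (a ^ (m+1) - c ^ (m+1))) = 0 := by
          linear_combination a * h0 - c * h2
        have hne : ((m + 1 : ℝ) * (a ^ (m+1) - c ^ (m+1))) ≠ 0 := by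
          apply mul_ne_zero
          · positivity
          · exact sub_ne_zero_of_ne hpow
        exact (mul_eq_zero.mp key).resolve_right hne
      have hg0 : g 0 = 0 := by
        have h2' : g 0 * a = 0 := by rw [hg2] at h2; linarith [h2]
        exact (mul_eq_zero.mp h2').resolve_right ha
      have hg1 : g 1 = 0 := by
        have h3' : g 1 * b = 0 := by rw [hg2] at h3; linarith [h3]
        exact (mul_eq_zero.mp h3').resolve_right hb
      intro i
      fin_cases i <;> assumption
end

section
/- Let Φ : ℝⁿ → ℝⁿ be C¹ with det(DΦ(x)) ≠ 0 on a dense open set, let R : ℝⁿ → ℝ, G : ℝⁿ → ℝⁿ, and define F(x) = R(x)·adj(DΦ(x))·G(Φ(x)). Suppose I₁, …, Iₘ : ℝⁿ → ℝ (m ≤ n−1) are C¹ functions whose gradients are linearly independent on a dense open subset of ℝⁿ, and each satisfies ∇Iⱼ · G ≡ 0. Then the gradients of H₁, …, Hₘ, where Hⱼ := Iⱼ ∘ Φ, are linearly independent on a dense open subset of ℝⁿ (in particular on every nonempty open set there is a point where they are independent). -/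
open Matrix

/-- Gradient of a scalar function on `ℝⁿ` at a point. -/
noncomputable def gradn {n : ℕ} (I : (Fin n → ℝ) → ℝ) (x : Fin n → ℝ) : Fin n → ℝ :=
  fun i => fderiv ℝ I x (Pi.single i 1)

/-!
By the inverse function theorem `Φ` maps neighbourhoods of every point of the dense open set `S`,
where its Jacobian is invertible, onto neighbourhoods, so `S ∩ Φ ⁻¹' T` is open and dense. At a point `x` of it
the chain rule gives `∇(Iⱼ ∘ Φ)(x) = DΦ(x)ᵀ ∇Iⱼ(Φ x)`, and the invertible matrix `DΦ(x)ᵀ` carries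
the independent family `∇Iⱼ(Φ x)` to an independent family.
-/

open Filter Topology

theorem Dense.inter_preimage_of_nhds_le_map {X Y : Type*} [TopologicalSpace X]
    [TopologicalSpace Y] {f : X → Y} {S : Set X} {T : Set Y} (hSdense : Dense S)
    (hSopen : IsOpen S) (hf : ∀ x ∈ S, 𝓝 (f x) ≤ map f (𝓝 x)) (hT : Dense T) :
    Dense (S ∩ f ⁻¹' T) := by
  refine dense_iff_inter_open.mpr fun U hU hUne => ?_
  obtain ⟨x, hxU, hxS⟩ := hSdense.inter_open_nonempty U hU hUne
  have himage : f '' (U ∩ S) ∈ 𝓝 (f x) :=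
    hf x hxS (image_mem_map ((hU.inter hSopen).mem_nhds ⟨hxU, hxS⟩))
  obtain ⟨_, hyT, u, ⟨huU, huS⟩, rfl⟩ := hT.inter_nhds_nonempty himage
  exact ⟨u, huU, huS, hyT⟩

theorem jacobian_eq_toMatrix' {n : ℕ} (Φ : (Fin n → ℝ) → (Fin n → ℝ)) (x : Fin n → ℝ) :
    jacobian Φ x = LinearMap.toMatrix' (fderiv ℝ Φ x : (Fin n → ℝ) →ₗ[ℝ] (Fin n → ℝ)) := by
  ext i j
  simp [jacobian, LinearMap.toMatrix'_apply]

theorem map_nhds_eq_of_det_jacobian_ne_zero {n : ℕ} {Φ : (Fin n → ℝ) → (Fin n → ℝ)}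
    {x : Fin n → ℝ} (hΦ : ContDiffAt ℝ 1 Φ x) (hdet : (jacobian Φ x).det ≠ 0) :
    map Φ (𝓝 x) = 𝓝 (Φ x) := by
  have hunit : IsUnit (fderiv ℝ Φ x : (Fin n → ℝ) →ₗ[ℝ] (Fin n → ℝ)) := by
    rw [LinearMap.isUnit_iff_isUnit_det, ← LinearMap.det_toMatrix', ← jacobian_eq_toMatrix']
    exact hdet.isUnit
  refine (hΦ.hasStrictFDerivAt one_ne_zero).map_nhds_eq_of_surj ?_
  exact LinearMap.range_eq_top.mpr (Module.End.isUnit_iff _ |>.mp hunit).2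

theorem fderiv_apply_eq_gradn_dotProduct {n : ℕ} (I : (Fin n → ℝ) → ℝ) (x v : Fin n → ℝ) :
    fderiv ℝ I x v = gradn I x ⬝ᵥ v := by
  conv_lhs => rw [pi_eq_sum_univ' v]
  simp [dotProduct, gradn, mul_comm]

theorem gradn_comp {n : ℕ} {Φ : (Fin n → ℝ) → (Fin n → ℝ)} {I : (Fin n → ℝ) → ℝ}
    {x : Fin n → ℝ} (hI : DifferentiableAt ℝ I (Φ x)) (hΦ : DifferentiableAt ℝ Φ x) :
    gradn (fun y => I (Φ y)) x = (jacobian Φ x)ᵀ *ᵥ gradn I (Φ x) := by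
  funext i
  change fderiv ℝ (fun y => I (Φ y)) x (Pi.single i 1) = _
  rw [fderiv_fun_comp x hI hΦ, ContinuousLinearMap.comp_apply, fderiv_apply_eq_gradn_dotProduct,
    Matrix.mulVec_transpose]
  rfl

theorem linearIndependent_gradn_comp {n : ℕ} {ι : Type*} {Φ : (Fin n → ℝ) → (Fin n → ℝ)}
    {I : ι → (Fin n → ℝ) → ℝ} {x : Fin n → ℝ} (hI : ∀ j, DifferentiableAt ℝ (I j) (Φ x))
    (hΦ : DifferentiableAt ℝ Φ x) (hdet : (jacobian Φ x).det ≠ 0)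
    (hind : LinearIndependent ℝ fun j => gradn (I j) (Φ x)) :
    LinearIndependent ℝ fun j => gradn (fun y => I j (Φ y)) x := by
  have hinj : Function.Injective ((jacobian Φ x)ᵀ.mulVecLin) := by
    rw [Matrix.coe_mulVecLin, Matrix.mulVec_injective_iff_isUnit, Matrix.isUnit_iff_isUnit_det,
      Matrix.det_transpose]
    exact hdet.isUnit
  simp_rw [gradn_comp (hI _) hΦ]
  exact hind.map' _ (LinearMap.ker_eq_bot.mpr hinj)

theorem stmt19_general {n m : ℕ}
    (Φ : (Fin n → ℝ) → (Fin n → ℝ)) (hΦ : ContDiff ℝ 1 Φ)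
    (S : Set (Fin n → ℝ)) (hSopen : IsOpen S) (hSdense : Dense S)
    (hdet : ∀ x ∈ S, (jacobian Φ x).det ≠ 0)
    (I : Fin m → (Fin n → ℝ) → ℝ) (hI : ∀ j, ContDiff ℝ 1 (I j))
    (T : Set (Fin n → ℝ)) (hTopen : IsOpen T) (hTdense : Dense T)
    (hind : ∀ x ∈ T, LinearIndependent ℝ (fun j => gradn (I j) x)) :
    ∃ W : Set (Fin n → ℝ), IsOpen W ∧ Dense W ∧
      ∀ x ∈ W, LinearIndependent ℝ (fun j => gradn (fun y => I j (Φ y)) x) := by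
  refine ⟨S ∩ Φ ⁻¹' T, hSopen.inter (hTopen.preimage hΦ.continuous), ?_, ?_⟩
  · refine hSdense.inter_preimage_of_nhds_le_map hSopen (fun x hx => ?_) hTdense
    exact (map_nhds_eq_of_det_jacobian_ne_zero hΦ.contDiffAt (hdet x hx)).ge
  · rintro x ⟨hxS, hxT⟩
    exact linearIndependent_gradn_comp (fun j => (hI j).differentiable one_ne_zero _)
      (hΦ.differentiable one_ne_zero x) (hdet x hxS) (hind (Φ x) hxT)

theorem stmt19 {n m : ℕ} (hm : m ≤ n - 1)
    (Φ G : (Fin n → ℝ) → (Fin n → ℝ)) (hΦ : ContDiff ℝ 1 Φ)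
    (S : Set (Fin n → ℝ)) (hSopen : IsOpen S) (hSdense : Dense S)
    (hdet : ∀ x ∈ S, (jacobian Φ x).det ≠ 0)
    (R : (Fin n → ℝ) → ℝ)
    (F : (Fin n → ℝ) → (Fin n → ℝ))
    (hF : ∀ x, F x = R x • (Matrix.adjugate (jacobian Φ x)) *ᵥ (G (Φ x)))
    (I : Fin m → (Fin n → ℝ) → ℝ) (hI : ∀ j, ContDiff ℝ 1 (I j))
    (T : Set (Fin n → ℝ)) (hTopen : IsOpen T) (hTdense : Dense T)
    (hind : ∀ x ∈ T, LinearIndependent ℝ (fun j => gradn (I j) x))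
    (hIG : ∀ j, ∀ u, fderiv ℝ (I j) u (G u) = 0) :
    ∃ W : Set (Fin n → ℝ), IsOpen W ∧ Dense W ∧
      ∀ x ∈ W, LinearIndependent ℝ (fun j => gradn (fun y => I j (Φ y)) x) :=
  stmt19_general Φ hΦ S hSopen hSdense hdet I hI T hTopen hTdense hind
end
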